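/- arXiv:1804.02945 — 3 statements merged into one kernel-verified Lean document; each statement's English description precedes it below -/
import Mathlib

section
/- Let h(z) = z/(1−z) and g(z) = log(1−z) − z/(1−z) (principal branch of the logarithm) on the unit disk 𝔻, and let f = h + conj(g), i.e. f(z) = z/(1−z) − conj(z/(1−z) − log(1−z)). Then h and g are each normal (as harmonic mappings with zero anti-analytic part), but f is not normal: ‖f‖_n = ∞. -/
/-!
Since `h' = 1/(1-z)²`, the quotient for `h` is `(1-|z|²)/(|1-z|²+|z|²) ≤ 2`. For `g`,
`(1-|z|²)|g'| ≤ 6/|1-z|`, and near `1` the pole of `z/(1-z)` dominates the logarithm, so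
`|g| ≳ 1/|1-z|` keeps the quotient bounded there. On the radius `z = 1 - t`, however, the poles of
`h` and `conj g` cancel: `f(1-t) = log t`, so the quotient for `f` is at least
`1/(t(1+log²t))`, which is unbounded as `t → 0`.
-/

open Complex Metric Set ENNReal Filter

noncomputable section

/-- The open unit disk in the complex plane. -/
def unitDisk : Set ℂ := Metric.ball (0 : ℂ) 1

notation "𝔻" => unitDisk

/-- The chordal distance on ℂ. -/
def chordal (z w : ℂ) : ℝ :=
  ‖z - w‖ /
    (Real.sqrt (1 + ‖z‖ ^ 2) * Real.sqrt (1 + ‖w‖ ^ 2))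

/-- The hyperbolic distance on the unit disk. -/
def hypDist (z w : ℂ) : ℝ :=
  (1 / 2) * Real.log
    ((1 + ‖(z - w) / (1 - (starRingEnd ℂ) z * w)‖) /
     (1 - ‖(z - w) / (1 - (starRingEnd ℂ) z * w)‖))

/-- The harmonic mapping `f = h + conj g`. -/
def harmMap (h g : ℂ → ℂ) : ℂ → ℂ := fun z => h z + (starRingEnd ℂ) (g z)

/-- The quantity `(1 - |z|²) (|h'(z)| + |g'(z)|) / (1 + |f(z)|²)` for `f = h + conj g`. -/
def nQuot (h g : ℂ → ℂ) (z : ℂ) : ℝ :=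
  (1 - ‖z‖ ^ 2) * (‖deriv h z‖ + ‖deriv g z‖) /
    (1 + ‖harmMap h g z‖ ^ 2)

/-- `‖f‖ₙ`, the normality norm of the harmonic mapping `f = h + conj g`,
as an element of `[0, ∞]`. -/
def harmNorm (h g : ℂ → ℂ) : ℝ≥0∞ :=
  ⨆ z ∈ 𝔻, ENNReal.ofReal (nQuot h g z)

/-- `φ` is a conformal automorphism of the unit disk. -/
def IsDiskAut (φ : ℂ → ℂ) : Prop :=
  DifferentiableOn ℂ φ 𝔻 ∧ Set.MapsTo φ 𝔻 𝔻 ∧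
    ∃ ψ : ℂ → ℂ, DifferentiableOn ℂ ψ 𝔻 ∧ Set.MapsTo ψ 𝔻 𝔻 ∧
      (∀ z ∈ 𝔻, ψ (φ z) = z) ∧ (∀ z ∈ 𝔻, φ (ψ z) = z)

lemma norm_lt_one_of_mem_unitDisk {z : ℂ} (hz : z ∈ 𝔻) : ‖z‖ < 1 :=
  mem_ball_zero_iff.mp hz

lemma harmNorm_lt_top_of_le {h g : ℂ → ℂ} {C : ℝ} (hC : ∀ z ∈ 𝔻, nQuot h g z ≤ C) :
    harmNorm h g < ⊤ :=
  (iSup₂_le fun z hz => ENNReal.ofReal_le_ofReal (hC z hz)).trans_lt ENNReal.ofReal_lt_top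

lemma harmNorm_eq_top_of_unbounded {h g : ℂ → ℂ}
    (H : ∀ M : ℝ, ∃ z ∈ 𝔻, M ≤ nQuot h g z) : harmNorm h g = ⊤ := by
  refine ENNReal.eq_top_of_forall_nnreal_le fun r => ?_
  obtain ⟨z, hz, hM⟩ := H r
  calc (r : ℝ≥0∞) = ENNReal.ofReal r := ENNReal.ofReal_coe_nnreal.symm
    _ ≤ ENNReal.ofReal (nQuot h g z) := ENNReal.ofReal_le_ofReal hM
    _ ≤ harmNorm h g := le_iSup₂ (f := fun z _ => ENNReal.ofReal (nQuot h g z)) z hz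

lemma one_sub_mem_slitPlane {z : ℂ} (hz : ‖z‖ < 1) : 1 - z ∈ slitPlane := by
  simpa [sub_eq_add_neg] using mem_slitPlane_of_norm_lt_one (z := -z) (by simpa)

lemma one_le_norm_add_norm_one_sub (z : ℂ) : 1 ≤ ‖z‖ + ‖1 - z‖ := by
  simpa using norm_add_le z (1 - z)

lemma hasDerivAt_div_one_sub {z : ℂ} (hz : 1 - z ≠ 0) :
    HasDerivAt (fun w : ℂ => w / (1 - w)) (1 / (1 - z) ^ 2) z := by
  refine ((hasDerivAt_id z).div ((hasDerivAt_id z).const_sub 1) hz).congr_deriv ?_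
  simp only [id_eq]
  ring

lemma hasDerivAt_log_one_sub_sub_div_one_sub {z : ℂ} (hz : 1 - z ∈ slitPlane) :
    HasDerivAt (fun w : ℂ => Complex.log (1 - w) - w / (1 - w)) (-(2 - z) / (1 - z) ^ 2) z := by
  have hz0 := slitPlane_ne_zero hz
  refine (((hasDerivAt_log hz).comp z ((hasDerivAt_id z).const_sub 1)).sub
    (hasDerivAt_div_one_sub hz0)).congr_deriv ?_
  field_simp
  ring

lemma Real.neg_log_le_two_div_sqrt {x : ℝ} (hx : 0 < x) : -Real.log x ≤ 2 / √x := by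
  have hs : 0 < √x := Real.sqrt_pos.mpr hx
  have hlog : Real.log x = 2 * Real.log √x := by
    rw [← Real.log_rpow hs, Real.rpow_two, Real.sq_sqrt hx.le]
  have := Real.log_le_sub_one_of_pos (inv_pos.mpr hs)
  rw [Real.log_inv] at this
  rw [hlog, div_eq_mul_inv]
  linarith

lemma Complex.norm_log_le (w : ℂ) : ‖Complex.log w‖ ≤ |Real.log ‖w‖| + Real.pi :=
  calc ‖Complex.log w‖ ≤ |(Complex.log w).re| + |(Complex.log w).im| :=
        norm_le_abs_re_add_abs_im _
    _ ≤ |Real.log ‖w‖| + Real.pi := by rw [log_re, log_im]; gcongr; exact abs_arg_le_pi w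

lemma norm_log_le_of_norm_le {w : ℂ} (hw : w ≠ 0) (hw' : ‖w‖ ≤ 1 / 16) :
    ‖Complex.log w‖ ≤ 3 / (4 * ‖w‖) := by
  set B := ‖w‖
  have hB : 0 < B := norm_pos_iff.mpr hw
  have hsB : √B ≤ 1 / 4 := by
    rw [show (1 / 4 : ℝ) = √(1 / 16) by rw [eq_comm, Real.sqrt_eq_iff_mul_self_eq] <;> norm_num]
    exact Real.sqrt_le_sqrt hw'
  have hs : 0 < √B := Real.sqrt_pos.mpr hB
  have hlog : |Real.log B| ≤ 1 / (2 * B) := by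
    rw [abs_of_neg (Real.log_neg hB (by linarith))]
    refine (Real.neg_log_le_two_div_sqrt hB).trans ?_
    rw [div_le_div_iff₀ hs (by positivity)]
    nlinarith [Real.mul_self_sqrt hB.le]
  have hpi : Real.pi ≤ 1 / (4 * B) := by
    rw [le_div_iff₀ (by positivity)]
    nlinarith [Real.pi_le_four]
  calc ‖Complex.log w‖ ≤ |Real.log B| + Real.pi := norm_log_le w
    _ ≤ 1 / (2 * B) + 1 / (4 * B) := add_le_add hlog hpi
    _ = 3 / (4 * B) := by field_simp; ring

lemma nQuot_div_one_sub_le {z : ℂ} (hz : ‖z‖ < 1) :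
    nQuot (fun w => w / (1 - w)) (fun _ => 0) z ≤ 2 := by
  have hne : 1 - z ≠ 0 := slitPlane_ne_zero (one_sub_mem_slitPlane hz)
  have hB : 0 < ‖1 - z‖ := norm_pos_iff.mpr hne
  have hsum := one_le_norm_add_norm_one_sub z
  simp only [nQuot, harmMap, (hasDerivAt_div_one_sub hne).deriv, deriv_const', map_zero,
    norm_zero, add_zero, norm_div, norm_pow, norm_one]
  rw [div_le_iff₀ (by positivity)]
  field_simp
  nlinarith [sq_nonneg (‖z‖ - ‖1 - z‖), norm_nonneg z]

lemma one_sub_norm_sq_mul_norm_deriv_le {z : ℂ} (hz : ‖z‖ < 1) :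
    (1 - ‖z‖ ^ 2) * ‖deriv (fun w => Complex.log (1 - w) - w / (1 - w)) z‖ ≤
      6 / ‖1 - z‖ := by
  have hne : 1 - z ≠ 0 := slitPlane_ne_zero (one_sub_mem_slitPlane hz)
  have hB : 0 < ‖1 - z‖ := norm_pos_iff.mpr hne
  have hfactor : 1 - ‖z‖ ^ 2 ≤ 2 * ‖1 - z‖ := by
    nlinarith [one_le_norm_add_norm_one_sub z, norm_nonneg z]
  have hnum : ‖2 - z‖ ≤ 3 := by
    calc ‖2 - z‖ ≤ ‖(2 : ℂ)‖ + ‖z‖ := norm_sub_le _ _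
      _ ≤ 3 := by norm_num; linarith
  rw [(hasDerivAt_log_one_sub_sub_div_one_sub (one_sub_mem_slitPlane hz)).deriv, norm_div,
    norm_neg, norm_pow]
  calc (1 - ‖z‖ ^ 2) * (‖2 - z‖ / ‖1 - z‖ ^ 2)
        ≤ (2 * ‖1 - z‖) * (3 / ‖1 - z‖ ^ 2) := by gcongr
    _ = 6 / ‖1 - z‖ := by field_simp; ring

lemma div_le_norm_log_one_sub_sub_div_one_sub {z : ℂ} (hz : 1 - z ≠ 0)
    (hz' : ‖1 - z‖ ≤ 1 / 16) :
    3 / (16 * ‖1 - z‖) ≤ ‖Complex.log (1 - z) - z / (1 - z)‖ := by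
  have hB : 0 < ‖1 - z‖ := norm_pos_iff.mpr hz
  have hA : 15 / 16 ≤ ‖z‖ := by linarith [one_le_norm_add_norm_one_sub z]
  have hlog := norm_log_le_of_norm_le hz hz'
  calc 3 / (16 * ‖1 - z‖) = 15 / 16 / ‖1 - z‖ - 3 / (4 * ‖1 - z‖) := by field_simp; ring
    _ ≤ ‖z / (1 - z)‖ - ‖Complex.log (1 - z)‖ := by
        rw [norm_div]; gcongr
    _ ≤ ‖Complex.log (1 - z) - z / (1 - z)‖ := by
        rw [norm_sub_rev]; exact norm_sub_norm_le _ _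

lemma nQuot_log_one_sub_sub_div_one_sub_le {z : ℂ} (hz : ‖z‖ < 1) :
    nQuot (fun w => Complex.log (1 - w) - w / (1 - w)) (fun _ => 0) z ≤ 96 := by
  have hne : 1 - z ≠ 0 := slitPlane_ne_zero (one_sub_mem_slitPlane hz)
  set B := ‖1 - z‖
  have hB : 0 < B := norm_pos_iff.mpr hne
  set G := ‖Complex.log (1 - z) - z / (1 - z)‖
  have hnum := one_sub_norm_sq_mul_norm_deriv_le hz
  have hnq : nQuot (fun w => Complex.log (1 - w) - w / (1 - w)) (fun _ => 0) z =
      (1 - ‖z‖ ^ 2) * ‖deriv (fun w => Complex.log (1 - w) - w / (1 - w)) z‖ /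
        (1 + G ^ 2) := by
    simp [nQuot, harmMap, G]
  rw [hnq, div_le_iff₀ (by positivity)]
  rcases le_or_gt (1 / 16) B with hfar | hnear
  · have : 6 / B ≤ 96 := by rw [div_le_iff₀ hB]; linarith
    nlinarith [sq_nonneg G]
  · have hG := div_le_norm_log_one_sub_sub_div_one_sub hne hnear.le
    have hG2 : (3 / (16 * B)) ^ 2 ≤ G ^ 2 := by gcongr
    have : 6 / B ≤ 96 * (3 / (16 * B)) ^ 2 := by
      rw [div_le_iff₀ hB]; field_simp; nlinarith
    nlinarith

lemma harmMap_one_sub_ofReal {t : ℝ} (ht : 0 < t) :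
    harmMap (fun w => w / (1 - w)) (fun w => Complex.log (1 - w) - w / (1 - w)) (1 - t) =
      Real.log t := by
  have h1 : (1 : ℂ) - (1 - t) = t := by ring
  have hq : ((1 : ℂ) - t) / t = ((1 - t) / t : ℝ) := by push_cast; ring
  simp only [harmMap, h1, hq, ← Complex.ofReal_log ht.le, ← Complex.ofReal_sub,
    Complex.conj_ofReal]
  push_cast
  ring

lemma norm_one_sub_ofReal {t : ℝ} (ht : t ≤ 1) : ‖(1 : ℂ) - t‖ = 1 - t := by
  rw [← Complex.ofReal_one, ← Complex.ofReal_sub, Complex.norm_real,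
    Real.norm_of_nonneg (by linarith)]

lemma inv_mul_le_nQuot_one_sub {t : ℝ} (ht : 0 < t) (ht' : t < 1) :
    (t * (1 + Real.log t ^ 2))⁻¹ ≤
      nQuot (fun w => w / (1 - w)) (fun w => Complex.log (1 - w) - w / (1 - w)) (1 - t) := by
  have h1 : (1 : ℂ) - (1 - t) = t := by ring
  have hderiv : ‖deriv (fun w : ℂ => w / (1 - w)) (1 - t)‖ = 1 / t ^ 2 := by
    rw [(hasDerivAt_div_one_sub (by rw [h1]; exact_mod_cast ht.ne')).deriv, h1, norm_div, norm_one,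
      norm_pow, Complex.norm_real, Real.norm_of_nonneg ht.le]
  rw [nQuot, harmMap_one_sub_ofReal ht, hderiv, norm_one_sub_ofReal ht'.le, Complex.norm_real,
    Real.norm_eq_abs, sq_abs, mul_inv, ← div_eq_mul_inv]
  gcongr ?_ / _
  calc t⁻¹ ≤ (1 - (1 - t) ^ 2) * (1 / t ^ 2) := by
        field_simp; nlinarith
    _ ≤ _ := mul_le_mul_of_nonneg_left (le_add_of_nonneg_right (norm_nonneg _)) (by nlinarith)

lemma exists_le_nQuot (M : ℝ) : ∃ z ∈ 𝔻, M ≤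
    nQuot (fun w => w / (1 - w)) (fun w => Complex.log (1 - w) - w / (1 - w)) z := by
  obtain ⟨N, hN, hN1⟩ := (((Real.tendsto_exp_div_pow_atTop 2).eventually_ge_atTop (2 * M)).and
    (eventually_ge_atTop 1)).exists
  have ht1 : Real.exp (-N) < 1 := Real.exp_lt_one_iff.mpr (by linarith)
  refine ⟨1 - Real.exp (-N), ?_, le_trans ?_ (inv_mul_le_nQuot_one_sub (Real.exp_pos _) ht1)⟩
  · rw [unitDisk, mem_ball_zero_iff, norm_one_sub_ofReal ht1.le]
    linarith [Real.exp_pos (-N)]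
  · rw [Real.log_exp, mul_inv, Real.exp_neg, inv_inv, neg_sq, ← div_eq_mul_inv]
    calc M ≤ Real.exp N / N ^ 2 / 2 := by linarith
      _ = Real.exp N / (2 * N ^ 2) := by ring
      _ ≤ Real.exp N / (1 + N ^ 2) := by gcongr; nlinarith

theorem not_normal_example :
    let h : ℂ → ℂ := fun z => z / (1 - z)
    let g : ℂ → ℂ := fun z => Complex.log (1 - z) - z / (1 - z)
    harmNorm h (fun _ => 0) < ⊤ ∧ harmNorm g (fun _ => 0) < ⊤ ∧ harmNorm h g = ⊤ :=
  ⟨harmNorm_lt_top_of_le fun _ hz => nQuot_div_one_sub_le (norm_lt_one_of_mem_unitDisk hz),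
    harmNorm_lt_top_of_le fun _ hz =>
      nQuot_log_one_sub_sub_div_one_sub_le (norm_lt_one_of_mem_unitDisk hz),
    harmNorm_eq_top_of_unbounded exists_le_nQuot⟩
end
end

section
/- Let f = h + conj(g) be a normal harmonic mapping on the unit disk 𝔻. Then the family F = {f∘φ : φ ∈ Aut(𝔻)} is spherically equicontinuous on compact subsets of 𝔻; more precisely, for every z₁ ∈ 𝔻 there exist r > 0 and a constant M̂ > 0 such that χ(f(φ(z)), f(φ(z₁))) ≤ M̂·|z − z₁| for every φ ∈ Aut(𝔻) and every z with |z − z₁| ≤ r. Consequently F is a normal family on 𝔻 (every sequence in F has a subsequence converging locally uniformly on 𝔻 with respect to the chordal metric). -/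
open Complex Metric Set ENNReal Filter

noncomputable section

/-- The chordal distance on the Riemann sphere, identified with `Option ℂ`
(`none` is the point at infinity). -/
def chordalO : Option ℂ → Option ℂ → ℝ
  | Option.some z, Option.some w => chordal z w
  | Option.some z, Option.none => 1 / Real.sqrt (1 + ‖z‖ ^ 2)
  | Option.none, Option.some w => 1 / Real.sqrt (1 + ‖w‖ ^ 2)
  | Option.none, Option.none => 0

/-!
Inverse stereographic projection `stereo` maps ℂ onto the sphere of radius `1/2` about `(0, 1/2)`
in `ℂ × ℝ` minus its north pole, isometrically for the chordal distance, and its differential at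
`w` has norm at most `4 / (1 + |w|²)`. For a holomorphic self-map `φ` of `𝔻`, Schwarz–Pick gives
`|φ'(z)| (1 - |z|²) ≤ 1 - |φ z|²`, so the differential of `stereo ∘ f ∘ φ` at `z` is bounded by
`4 ‖f‖ₙ / (1 - |z|²)` independently of `φ`. By the mean value inequality the family is uniformly
Lipschitz on each disk `|z| ≤ t < 1`, which is the local estimate; since the sphere is compact,
Arzelà–Ascoli then extracts a subsequence converging uniformly on compact subsets of `𝔻`.
-/

open Topology

theorem ContinuousMap.exists_subseq_tendsto_of_equicontinuous {X Y : Type*} [TopologicalSpace X]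
    [WeaklyLocallyCompactSpace X] [SigmaCompactSpace X] [MetricSpace Y] (F : ℕ → C(X, Y))
    (hF : Equicontinuous fun n => ⇑(F n)) {Q : Set Y} (hQ : IsCompact Q) (hFQ : ∀ n x, F n x ∈ Q) :
    ∃ G : C(X, Y), ∃ s : ℕ → ℕ, StrictMono s ∧ Tendsto (F ∘ s) atTop (𝓝 G) := by
  have hemb : IsClosedEmbedding
      (UniformOnFun.ofFun {K : Set X | IsCompact K} ∘ ((⇑) : C(X, Y) → X → Y)) := by
    refine ⟨isUniformEmbedding_toUniformOnFunIsCompact.isEmbedding, ?_⟩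
    change IsClosed (range toUniformOnFunIsCompact)
    rw [range_toUniformOnFunIsCompact]
    exact UniformOnFun.isClosed_setOfPred_continuous CompactlyCoherentSpace.isCoherentWith
  have hrange : Equicontinuous ((⇑) ∘ ((↑) : range F → C(X, Y))) := by
    have h : (⇑) ∘ ((↑) : range F → C(X, Y)) = (fun n => ⇑(F n)) ∘ rangeSplitting F := by
      funext i
      simp only [Function.comp_apply, apply_rangeSplitting]
    exact h ▸ hF.comp (rangeSplitting F)
  have hcpt : IsCompact (closure (range F)) :=
    ArzelaAscoli.isCompact_closure_of_isClosedEmbedding (fun _ hK => hK) hemb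
      (fun K _ => hrange.equicontinuousOn K)
      (fun _ _ x _ => ⟨Q, hQ, by rintro _ ⟨n, rfl⟩; exact hFQ n x⟩)
  obtain ⟨G, -, s, hs, hG⟩ := hcpt.tendsto_subseq fun n => subset_closure (mem_range_self n)
  exact ⟨G, s, hs, hG⟩

section Stereographic

def stereo (w : ℂ) : WithLp 2 (ℂ × ℝ) :=
  WithLp.toLp 2 ((1 + ‖w‖ ^ 2)⁻¹ • w, 1 - (1 + ‖w‖ ^ 2)⁻¹)

def northPole : WithLp 2 (ℂ × ℝ) := WithLp.toLp 2 (0, 1)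

def sphereCenter : WithLp 2 (ℂ × ℝ) := WithLp.toLp 2 (0, 1 / 2)

def stereoOption : Option ℂ → WithLp 2 (ℂ × ℝ)
  | some w => stereo w
  | none => northPole

lemma norm_toLp_sq {α : Type*} [SeminormedAddCommGroup α] (x : α) (y : ℝ) :
    ‖WithLp.toLp 2 (x, y)‖ ^ 2 = ‖x‖ ^ 2 + y ^ 2 := by
  simp [WithLp.prod_norm_sq_eq_of_L2]

lemma norm_toLp_le {α β : Type*} [SeminormedAddCommGroup α] [SeminormedAddCommGroup β]
    (x : α) (y : β) : ‖WithLp.toLp 2 (x, y)‖ ≤ ‖x‖ + ‖y‖ := by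
  rw [← pow_le_pow_iff_left₀ (norm_nonneg _) (by positivity) two_ne_zero,
    WithLp.prod_norm_sq_eq_of_L2, WithLp.toLp_fst, WithLp.toLp_snd]
  nlinarith [norm_nonneg x, norm_nonneg y]

lemma norm_stereo_sub_stereo (a b : ℂ) : ‖stereo a - stereo b‖ = chordal a b := by
  have ha : 0 < 1 + ‖a‖ ^ 2 := by positivity
  have hb : 0 < 1 + ‖b‖ ^ 2 := by positivity
  have key : ‖stereo a - stereo b‖ ^ 2 = ‖a - b‖ ^ 2 / ((1 + ‖a‖ ^ 2) * (1 + ‖b‖ ^ 2)) := by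
    rw [stereo, stereo, ← WithLp.toLp_sub, Prod.mk_sub_mk, norm_toLp_sq, norm_sub_sq_real,
      norm_sub_sq_real, norm_smul, norm_smul, real_inner_smul_left, real_inner_smul_right,
      Real.norm_of_nonneg (inv_nonneg.2 ha.le), Real.norm_of_nonneg (inv_nonneg.2 hb.le)]
    field_simp
    ring
  rw [chordal, ← Real.sqrt_mul ha.le, ← Real.sqrt_sq (norm_nonneg (a - b)),
    ← Real.sqrt_div' _ (by positivity), ← key, Real.sqrt_sq (norm_nonneg _)]

lemma norm_stereo_sub_northPole (w : ℂ) : ‖stereo w - northPole‖ = 1 / √(1 + ‖w‖ ^ 2) := by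
  have hw : 0 < 1 + ‖w‖ ^ 2 := by positivity
  have key : ‖stereo w - northPole‖ ^ 2 = 1 / (1 + ‖w‖ ^ 2) := by
    rw [stereo, northPole, ← WithLp.toLp_sub, Prod.mk_sub_mk, norm_toLp_sq, sub_zero,
      norm_smul, Real.norm_of_nonneg (inv_nonneg.2 hw.le)]
    field_simp
    ring
  rw [← Real.sqrt_sq (norm_nonneg (stereo w - northPole)), key, Real.sqrt_div' _ hw.le,
    Real.sqrt_one]

lemma chordalO_some_eq_dist (w : ℂ) (o : Option ℂ) :
    chordalO (some w) o = dist (stereo w) (stereoOption o) := by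
  cases o with
  | some v => rw [chordalO, stereoOption, dist_eq_norm, norm_stereo_sub_stereo]
  | none => rw [chordalO, stereoOption, dist_eq_norm, norm_stereo_sub_northPole]

lemma stereo_mem_sphere (w : ℂ) : stereo w ∈ sphere sphereCenter (1 / 2) := by
  have hw : 0 < 1 + ‖w‖ ^ 2 := by positivity
  rw [mem_sphere, dist_eq_norm, ← sq_eq_sq₀ (norm_nonneg _) (by norm_num), stereo, sphereCenter,
    ← WithLp.toLp_sub, Prod.mk_sub_mk, norm_toLp_sq, sub_zero,
    norm_smul, Real.norm_of_nonneg (inv_nonneg.2 hw.le)]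
  field_simp
  ring

lemma sphere_subset_range_stereoOption : sphere sphereCenter (1 / 2) ⊆ range stereoOption := by
  rintro ⟨c, q⟩ hp
  have hcq : ‖c‖ ^ 2 = q - q ^ 2 := by
    rw [mem_sphere, dist_eq_norm, sphereCenter, ← WithLp.toLp_sub, Prod.mk_sub_mk, sub_zero] at hp
    have := norm_toLp_sq c (q - 1 / 2)
    rw [hp] at this
    linarith
  rcases (show q ≤ 1 by nlinarith [norm_nonneg c]).lt_or_eq with hq | rfl
  · refine ⟨some ((1 - q)⁻¹ • c), ?_⟩
    have h1q : 0 < 1 - q := by linarith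
    have hu : (1 + ‖(1 - q)⁻¹ • c‖ ^ 2)⁻¹ = 1 - q := by
      rw [norm_smul, mul_pow, hcq, Real.norm_of_nonneg (inv_nonneg.2 h1q.le)]
      field_simp
      ring
    simp only [stereoOption, stereo, hu, smul_smul, mul_inv_cancel₀ h1q.ne', one_smul]
    congr 2
    ring
  · refine ⟨none, ?_⟩
    have : c = 0 := by simpa using hcq
    rw [stereoOption, northPole, this]

lemma exists_hasFDerivAt_stereo (w : ℂ) :
    ∃ L : ℂ →L[ℝ] WithLp 2 (ℂ × ℝ), HasFDerivAt stereo L w ∧ ‖L‖ ≤ 4 * (1 + ‖w‖ ^ 2)⁻¹ := by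
  set u := (1 + ‖w‖ ^ 2)⁻¹ with hu_def
  have hN : 1 + ‖w‖ ^ 2 ≠ 0 := by positivity
  set ℓ : ℂ →L[ℝ] ℝ := -((1 + ‖w‖ ^ 2) ^ 2)⁻¹ • (2 • innerSL ℝ w) with hℓ_def
  have hu : HasFDerivAt (fun z : ℂ => (1 + ‖z‖ ^ 2)⁻¹) ℓ w :=
    (hasDerivAt_inv hN).comp_hasFDerivAt w ((hasStrictFDerivAt_norm_sq w).hasFDerivAt.const_add 1)
  have hpair : HasFDerivAt (fun z : ℂ => ((1 + ‖z‖ ^ 2)⁻¹ • z, 1 - (1 + ‖z‖ ^ 2)⁻¹))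
      ((u • ContinuousLinearMap.id ℝ ℂ + ℓ.smulRight w).prod (-ℓ)) w :=
    (hu.smul (hasFDerivAt_id w)).prodMk (by simpa using hu.const_sub 1)
  refine ⟨(WithLp.prodContinuousLinearEquiv 2 ℝ ℂ ℝ).symm.toContinuousLinearMap.comp
    ((u • ContinuousLinearMap.id ℝ ℂ + ℓ.smulRight w).prod (-ℓ)),
    (WithLp.prodContinuousLinearEquiv 2 ℝ ℂ ℝ).symm.hasFDerivAt.comp w hpair, ?_⟩
  have hu0 : 0 < u := by positivity
  have hℓ : ∀ v, |ℓ v| ≤ 2 * u ^ 2 * ‖w‖ * ‖v‖ := by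
    intro v
    have hℓv : ℓ v = -(u ^ 2 * (2 * inner ℝ w v)) := by
      simp only [hℓ_def, hu_def, smul_apply, innerSL_apply_apply, smul_eq_mul,
        nsmul_eq_mul, inv_pow, Nat.cast_ofNat, neg_mul]
    rw [hℓv, abs_neg, abs_mul, abs_mul, abs_two, abs_of_nonneg (sq_nonneg u)]
    nlinarith [mul_le_mul_of_nonneg_left (abs_real_inner_le_norm w v) (sq_nonneg u)]
  have hw1 : u * ‖w‖ ^ 2 ≤ 1 := by
    rw [hu_def, inv_mul_le_one₀ (by positivity)]; linarith
  have hw2 : 2 * u * ‖w‖ ≤ 1 := by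
    rw [hu_def, mul_comm 2, mul_assoc, inv_mul_le_one₀ (by positivity)]
    nlinarith [sq_nonneg (‖w‖ - 1)]
  refine ContinuousLinearMap.opNorm_le_bound _ (by positivity) fun v => ?_
  calc _ ≤ ‖u • v + ℓ v • w‖ + ‖-ℓ v‖ := norm_toLp_le _ _
    _ ≤ u * ‖v‖ + |ℓ v| * ‖w‖ + |ℓ v| := by
      rw [norm_neg, Real.norm_eq_abs]
      gcongr
      refine (norm_add_le _ _).trans_eq ?_
      rw [norm_smul, norm_smul, Real.norm_eq_abs, Real.norm_eq_abs, abs_of_pos hu0]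
    _ ≤ 4 * u * ‖v‖ := by
      nlinarith [hℓ v, mul_le_mul_of_nonneg_left hw1 (by positivity : 0 ≤ 2 * u * ‖v‖),
        mul_le_mul_of_nonneg_left hw2 (by positivity : 0 ≤ u * ‖v‖), norm_nonneg w]

end Stereographic

theorem exists_subseq_chordalO_lt_of_equicontinuous {U : Set ℂ} (hU : IsOpen U)
    (F : ℕ → ℂ → ℂ) (hF : Equicontinuous fun n (z : U) => stereo (F n z)) :
    ∃ s : ℕ → ℕ, StrictMono s ∧ ∃ F₀ : ℂ → Option ℂ, ∀ K ⊆ U, IsCompact K → ∀ ε > (0 : ℝ),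
      ∀ᶠ n in atTop, ∀ z ∈ K, chordalO (some (F (s n) z)) (F₀ z) < ε := by
  classical
  have := hU.locallyCompactSpace
  obtain ⟨G, s, hs, hG⟩ := ContinuousMap.exists_subseq_tendsto_of_equicontinuous
    (fun n => ⟨fun z : U => stereo (F n z), hF.continuous n⟩) hF
    (isCompact_sphere sphereCenter (1 / 2)) fun n z => stereo_mem_sphere _
  have hGmem : ∀ z, G z ∈ sphere sphereCenter (1 / 2) := fun z =>
    isClosed_sphere.mem_of_tendsto ((continuous_eval_const z).tendsto G |>.comp hG)
      (Eventually.of_forall fun n => stereo_mem_sphere _)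
  choose F₁ hF₁ using fun z => sphere_subset_range_stereoOption (hGmem z)
  refine ⟨s, hs, fun z => if hz : z ∈ U then F₁ ⟨z, hz⟩ else none, fun K hKU hK ε hε => ?_⟩
  have hK' : IsCompact ((↑) ⁻¹' K : Set U) := by
    rwa [Subtype.isCompact_iff, Subtype.image_preimage_coe, inter_eq_right.2 hKU]
  filter_upwards [Metric.tendstoUniformlyOn_iff.1
    (ContinuousMap.tendsto_iff_forall_isCompact_tendstoUniformlyOn.1 hG _ hK') ε hε] with n hn z hz
  rw [dif_pos (hKU hz), chordalO_some_eq_dist, hF₁, dist_comm]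
  exact hn ⟨z, hKU hz⟩ hz

section SchwarzPick

/-- The involution of `𝔻` exchanging `0` and `a`. -/
def diskMoebius (a w : ℂ) : ℂ := (a - w) / (1 - (starRingEnd ℂ) a * w)

lemma diskMoebius_zero (a : ℂ) : diskMoebius a 0 = a := by simp [diskMoebius]

lemma diskMoebius_self (a : ℂ) : diskMoebius a a = 0 := by simp [diskMoebius]

lemma one_sub_conj_mul_ne_zero {a w : ℂ} (ha : ‖a‖ < 1) (hw : ‖w‖ ≤ 1) :
    1 - (starRingEnd ℂ) a * w ≠ 0 := by
  refine sub_ne_zero.2 fun h => ?_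
  have := congrArg norm h
  rw [norm_one, norm_mul, Complex.norm_conj] at this
  nlinarith [norm_nonneg a, norm_nonneg w]

lemma normSq_one_sub_conj_mul_sub_normSq_sub (a w : ℂ) :
    normSq (1 - (starRingEnd ℂ) a * w) - normSq (a - w) = (1 - normSq a) * (1 - normSq w) := by
  simp only [normSq_apply, sub_re, sub_im, mul_re, mul_im, one_re, one_im, conj_re, conj_im]
  ring

lemma mapsTo_diskMoebius {a : ℂ} (ha : a ∈ 𝔻) : MapsTo (diskMoebius a) 𝔻 𝔻 := by
  intro w hw
  rw [unitDisk, mem_ball_zero_iff] at ha hw ⊢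
  have hden := one_sub_conj_mul_ne_zero ha hw.le
  rw [diskMoebius, norm_div, div_lt_one (norm_pos_iff.2 hden), ← sq_lt_sq₀ (norm_nonneg _)
    (norm_nonneg _), ← normSq_eq_norm_sq, ← normSq_eq_norm_sq, ← sub_pos,
    normSq_one_sub_conj_mul_sub_normSq_sub, normSq_eq_norm_sq, normSq_eq_norm_sq]
  have : ‖a‖ ^ 2 < 1 := by nlinarith [norm_nonneg a]
  have : ‖w‖ ^ 2 < 1 := by nlinarith [norm_nonneg w]
  nlinarith

lemma hasDerivAt_diskMoebius {a w : ℂ} (ha : ‖a‖ < 1) (hw : ‖w‖ ≤ 1) :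
    HasDerivAt (diskMoebius a) ((normSq a - 1) / (1 - (starRingEnd ℂ) a * w) ^ 2) w := by
  have hd := ((hasDerivAt_id w).const_sub a).div
    (((hasDerivAt_id w).const_mul ((starRingEnd ℂ) a)).const_sub 1)
    (one_sub_conj_mul_ne_zero ha hw)
  refine hd.congr_deriv ?_
  rw [← Complex.mul_conj, id]
  ring

lemma differentiableOn_diskMoebius {a : ℂ} (ha : a ∈ 𝔻) : DifferentiableOn ℂ (diskMoebius a) 𝔻 :=
  fun _ hw => (hasDerivAt_diskMoebius (mem_ball_zero_iff.1 ha)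
    (mem_ball_zero_iff.1 hw).le).differentiableAt.differentiableWithinAt

lemma norm_normSq_sub_one {a : ℂ} (ha : ‖a‖ < 1) : ‖(normSq a : ℂ) - 1‖ = 1 - ‖a‖ ^ 2 := by
  rw [← Complex.ofReal_one, ← Complex.ofReal_sub, norm_real, Real.norm_eq_abs, normSq_eq_norm_sq,
    abs_of_nonpos (by nlinarith [norm_nonneg a]), neg_sub]

lemma hasDerivAt_diskMoebius_zero {a : ℂ} (ha : ‖a‖ < 1) :
    HasDerivAt (diskMoebius a) (normSq a - 1) 0 := by
  simpa using hasDerivAt_diskMoebius ha (norm_zero.trans_le zero_le_one)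

lemma hasDerivAt_diskMoebius_self {a : ℂ} (ha : ‖a‖ < 1) :
    HasDerivAt (diskMoebius a) (normSq a - 1)⁻¹ a := by
  refine (hasDerivAt_diskMoebius ha ha.le).congr_deriv ?_
  have h : (normSq a : ℂ) - 1 ≠ 0 := by
    rw [← norm_ne_zero_iff, norm_normSq_sub_one ha]; nlinarith [norm_nonneg a]
  rw [← normSq_eq_conj_mul_self, show (1 - (normSq a : ℂ)) ^ 2 = (normSq a - 1) * (normSq a - 1) by
    ring, div_mul_cancel_left₀ h]

theorem norm_deriv_mul_le_of_mapsTo_unitDisk {φ : ℂ → ℂ} (hd : DifferentiableOn ℂ φ 𝔻)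
    (hm : MapsTo φ 𝔻 𝔻) {z : ℂ} (hz : z ∈ 𝔻) :
    ‖deriv φ z‖ * (1 - ‖z‖ ^ 2) ≤ 1 - ‖φ z‖ ^ 2 := by
  set b := φ z with hb
  have hbD : b ∈ 𝔻 := hm hz
  have hz1 : ‖z‖ < 1 := mem_ball_zero_iff.1 hz
  have hb1 : ‖b‖ < 1 := mem_ball_zero_iff.1 hbD
  set Ψ := diskMoebius b ∘ φ ∘ diskMoebius z
  have hΨm : MapsTo Ψ 𝔻 𝔻 := (mapsTo_diskMoebius hbD).comp (hm.comp (mapsTo_diskMoebius hz))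
  have hΨd : DifferentiableOn ℂ Ψ 𝔻 := (differentiableOn_diskMoebius hbD).comp
    (hd.comp (differentiableOn_diskMoebius hz) (mapsTo_diskMoebius hz))
    (hm.comp (mapsTo_diskMoebius hz))
  have hΨ0 : Ψ 0 = 0 := by simp [Ψ, diskMoebius_zero, ← hb, diskMoebius_self]
  have hΨ' : HasDerivAt Ψ (((normSq b : ℂ) - 1)⁻¹ * (deriv φ z * (normSq z - 1))) 0 := by
    have hφ : HasDerivAt φ (deriv φ z) z :=
      (hd.differentiableAt (isOpen_ball.mem_nhds hz)).hasDerivAt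
    exact (hasDerivAt_diskMoebius_self hb1).comp_of_eq 0
      (hφ.comp_of_eq 0 (hasDerivAt_diskMoebius_zero hz1) (diskMoebius_zero z).symm)
      (by simp [diskMoebius_zero, b])
  have hSchwarz : ‖deriv Ψ 0‖ ≤ 1 := Complex.norm_deriv_le_one_of_mapsTo_ball hΨd
    (by rw [hΨ0]; exact hΨm.mono_right ball_subset_closedBall) one_pos
  rw [hΨ'.deriv, norm_mul, norm_mul, norm_inv, norm_normSq_sub_one hb1,
    norm_normSq_sub_one hz1, inv_mul_le_iff₀ (by nlinarith [norm_nonneg b]), mul_one] at hSchwarz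
  exact hSchwarz

end SchwarzPick

section NormalHarmonic

variable {h g φ : ℂ → ℂ} {M : ℝ}

lemma nQuot_nonneg {w : ℂ} (hw : w ∈ 𝔻) : 0 ≤ nQuot h g w := by
  have : 0 ≤ 1 - ‖w‖ ^ 2 := by nlinarith [norm_nonneg w, mem_ball_zero_iff.1 hw]
  unfold nQuot
  positivity

lemma nonneg_of_forall_nQuot_le (hM : ∀ w ∈ 𝔻, nQuot h g w ≤ M) : 0 ≤ M :=
  have h0 : (0 : ℂ) ∈ 𝔻 := mem_ball_self one_pos
  (nQuot_nonneg h0).trans (hM 0 h0)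

lemma nQuot_le_toReal_harmNorm (hf : harmNorm h g ≠ ⊤) {w : ℂ} (hw : w ∈ 𝔻) :
    nQuot h g w ≤ (harmNorm h g).toReal :=
  (ENNReal.ofReal_le_iff_le_toReal hf).1 <|
    le_iSup₂ (f := fun z (_ : z ∈ 𝔻) => ENNReal.ofReal (nQuot h g z)) w hw

lemma exists_hasFDerivAt_harmMap {a b w : ℂ} (hh : HasDerivAt h a w)
    (hg : HasDerivAt g b w) :
    ∃ L : ℂ →L[ℝ] ℂ, HasFDerivAt (harmMap h g) L w ∧ ‖L‖ ≤ ‖a‖ + ‖b‖ := by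
  refine ⟨_, hh.hasFDerivAt.restrictScalars ℝ |>.add
    ((conjCLE : ℂ →L[ℝ] ℂ).hasFDerivAt.comp w (hg.hasFDerivAt.restrictScalars ℝ)), ?_⟩
  refine ContinuousLinearMap.opNorm_le_bound _ (by positivity) fun v => ?_
  calc _ = ‖v * a + (starRingEnd ℂ) (v * b)‖ := rfl
    _ ≤ ‖v * a‖ + ‖(starRingEnd ℂ) (v * b)‖ := norm_add_le _ _
    _ = (‖a‖ + ‖b‖) * ‖v‖ := by rw [norm_conj, norm_mul, norm_mul]; ring

lemma exists_hasFDerivAt_stereo_harmMap_comp (hh : DifferentiableOn ℂ h 𝔻)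
    (hg : DifferentiableOn ℂ g 𝔻) (hM : ∀ w ∈ 𝔻, nQuot h g w ≤ M)
    (hφd : DifferentiableOn ℂ φ 𝔻) (hφm : MapsTo φ 𝔻 𝔻) {z : ℂ} (hz : z ∈ 𝔻) :
    ∃ L : ℂ →L[ℝ] WithLp 2 (ℂ × ℝ), HasFDerivAt (fun x => stereo (harmMap h g (φ x))) L z ∧
      ‖L‖ ≤ 4 * M / (1 - ‖z‖ ^ 2) := by
  set w := φ z
  have hw : w ∈ 𝔻 := hφm hz
  have hφ' := (hφd.differentiableAt (isOpen_ball.mem_nhds hz)).hasDerivAt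
  have hh' := (hh.differentiableAt (isOpen_ball.mem_nhds hw)).hasDerivAt
  have hg' := (hg.differentiableAt (isOpen_ball.mem_nhds hw)).hasDerivAt
  obtain ⟨LF, hLF, hLFn⟩ := exists_hasFDerivAt_harmMap (hh'.comp z hφ') (hg'.comp z hφ')
  obtain ⟨LS, hLS, hLSn⟩ := exists_hasFDerivAt_stereo (harmMap h g w)
  refine ⟨LS.comp LF, (hLS.comp z hLF :), ?_⟩
  have hz2 : 0 < 1 - ‖z‖ ^ 2 := by nlinarith [norm_nonneg z, mem_ball_zero_iff.1 hz]
  have hSP := norm_deriv_mul_le_of_mapsTo_unitDisk hφd hφm hz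
  rw [norm_mul, norm_mul, ← add_mul] at hLFn
  calc ‖LS.comp LF‖ ≤ ‖LS‖ * ‖LF‖ := LS.opNorm_comp_le LF
    _ ≤ 4 * (1 + ‖harmMap h g w‖ ^ 2)⁻¹ * ((‖deriv h w‖ + ‖deriv g w‖) * ‖deriv φ z‖) := by
      gcongr
    _ ≤ 4 * nQuot h g w / (1 - ‖z‖ ^ 2) := by
      rw [le_div_iff₀ hz2, nQuot, div_eq_mul_inv]
      nlinarith [mul_le_mul_of_nonneg_left hSP
        (by positivity : 0 ≤ 4 * (1 + ‖harmMap h g w‖ ^ 2)⁻¹ * (‖deriv h w‖ + ‖deriv g w‖))]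
    _ ≤ 4 * M / (1 - ‖z‖ ^ 2) := by gcongr; exact hM w hw

lemma chordal_harmMap_comp_le (hh : DifferentiableOn ℂ h 𝔻) (hg : DifferentiableOn ℂ g 𝔻)
    (hM : ∀ w ∈ 𝔻, nQuot h g w ≤ M) (hφd : DifferentiableOn ℂ φ 𝔻) (hφm : MapsTo φ 𝔻 𝔻)
    {t : ℝ} (ht : t < 1) {z w : ℂ} (hz : z ∈ closedBall 0 t) (hw : w ∈ closedBall 0 t) :
    chordal (harmMap h g (φ z)) (harmMap h g (φ w)) ≤ 4 * M / (1 - t ^ 2) * ‖z - w‖ := by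
  have hsub : closedBall (0 : ℂ) t ⊆ 𝔻 := closedBall_subset_ball ht
  choose! L hL hLn using fun x (hx : x ∈ 𝔻) =>
    exists_hasFDerivAt_stereo_harmMap_comp hh hg hM hφd hφm hx
  rw [← norm_stereo_sub_stereo]
  refine (convex_closedBall 0 t).norm_image_sub_le_of_norm_hasFDerivWithin_le
    (fun x hx => (hL x (hsub hx)).hasFDerivWithinAt) (fun x hx => (hLn x (hsub hx)).trans ?_) hw hz
  have ht0 : 0 ≤ t := (norm_nonneg x).trans (mem_closedBall_zero_iff.1 hx)
  have hxt : ‖x‖ ^ 2 ≤ t ^ 2 := pow_le_pow_left₀ (norm_nonneg x) (mem_closedBall_zero_iff.1 hx) 2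
  have ht2 : 0 < 1 - t ^ 2 := by nlinarith
  have hM0 := nonneg_of_forall_nQuot_le hM
  gcongr

lemma exists_chordal_harmMap_comp_le (hh : DifferentiableOn ℂ h 𝔻)
    (hg : DifferentiableOn ℂ g 𝔻) (hM : ∀ w ∈ 𝔻, nQuot h g w ≤ M) {z₁ : ℂ} (hz₁ : z₁ ∈ 𝔻) :
    ∃ r > (0 : ℝ), ∃ C > (0 : ℝ), closedBall z₁ r ⊆ 𝔻 ∧ ∀ φ : ℂ → ℂ,
      DifferentiableOn ℂ φ 𝔻 → MapsTo φ 𝔻 𝔻 → ∀ z ∈ closedBall z₁ r,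
        chordal (harmMap h g (φ z)) (harmMap h g (φ z₁)) ≤ C * ‖z - z₁‖ := by
  have hz₁' : ‖z₁‖ < 1 := mem_ball_zero_iff.1 hz₁
  set t := (1 + ‖z₁‖) / 2 with ht_def
  have ht : t < 1 := by linarith
  have hsub : closedBall z₁ ((1 - ‖z₁‖) / 2) ⊆ closedBall 0 t :=
    closedBall_subset_closedBall' (by rw [dist_zero_right]; linarith)
  have ht2 : 0 < 1 - t ^ 2 := by nlinarith [norm_nonneg z₁]
  have hM0 := nonneg_of_forall_nQuot_le hM
  refine ⟨(1 - ‖z₁‖) / 2, by linarith, 4 * M / (1 - t ^ 2) + 1, by positivity,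
    hsub.trans (closedBall_subset_ball ht), fun φ hφd hφm z hz => ?_⟩
  refine (chordal_harmMap_comp_le hh hg hM hφd hφm ht (hsub hz)
    (hsub (mem_closedBall_self (by linarith)))).trans ?_
  gcongr
  linarith

lemma equicontinuous_stereo_harmMap_comp (hh : DifferentiableOn ℂ h 𝔻)
    (hg : DifferentiableOn ℂ g 𝔻) (hM : ∀ w ∈ 𝔻, nQuot h g w ≤ M) {ι : Type*}
    (φ : ι → ℂ → ℂ) (hφd : ∀ i, DifferentiableOn ℂ (φ i) 𝔻) (hφm : ∀ i, MapsTo (φ i) 𝔻 𝔻) :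
    Equicontinuous fun i (z : 𝔻) => stereo (harmMap h g (φ i z)) := by
  intro z₀
  obtain ⟨r, hr, C, -, -, hC⟩ := exists_chordal_harmMap_comp_le hh hg hM z₀.2
  refine Metric.equicontinuousAt_of_continuity_modulus (fun z : 𝔻 => C * ‖(z : ℂ) - z₀‖) ?_ _ ?_
  · exact (continuous_const.mul (continuous_subtype_val.sub continuous_const).norm).tendsto'
      _ _ (by simp)
  · filter_upwards [continuous_subtype_val.continuousAt.preimage_mem_nhds
      (closedBall_mem_nhds (z₀ : ℂ) hr)] with z hz i
    rw [dist_comm, dist_eq_norm, norm_stereo_sub_stereo]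
    exact hC (φ i) (hφd i) (hφm i) z hz

end NormalHarmonic

theorem normal_family_of_normal (h g : ℂ → ℂ)
    (hh : DifferentiableOn ℂ h 𝔻) (hg : DifferentiableOn ℂ g 𝔻)
    (hf : harmNorm h g < ⊤) :
    (∀ z₁ ∈ 𝔻, ∃ r > (0 : ℝ), ∃ M > (0 : ℝ), Metric.closedBall z₁ r ⊆ 𝔻 ∧
      ∀ φ : ℂ → ℂ, IsDiskAut φ → ∀ z ∈ Metric.closedBall z₁ r,
        chordal (harmMap h g (φ z)) (harmMap h g (φ z₁)) ≤ M * ‖z - z₁‖) ∧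
    (∀ φ : ℕ → ℂ → ℂ, (∀ n, IsDiskAut (φ n)) →
      ∃ s : ℕ → ℕ, StrictMono s ∧ ∃ F₀ : ℂ → Option ℂ,
        ∀ K ⊆ 𝔻, IsCompact K → ∀ ε > (0 : ℝ), ∀ᶠ n in Filter.atTop,
          ∀ z ∈ K, chordalO (Option.some (harmMap h g (φ (s n) z))) (F₀ z) < ε) := by
  have hM : ∀ w ∈ 𝔻, nQuot h g w ≤ (harmNorm h g).toReal := fun w hw =>
    nQuot_le_toReal_harmNorm hf.ne hw
  refine ⟨fun z₁ hz₁ => ?_, fun φ hφ => ?_⟩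
  · obtain ⟨r, hr, C, hC, hsub, hle⟩ := exists_chordal_harmMap_comp_le hh hg hM hz₁
    exact ⟨r, hr, C, hC, hsub, fun φ hφ => hle φ hφ.1 hφ.2.1⟩
  · exact exists_subseq_chordalO_lt_of_equicontinuous isOpen_ball
      (fun n z => harmMap h g (φ n z))
      (equicontinuous_stereo_harmMap_comp hh hg hM φ (fun n => (hφ n).1) fun n => (hφ n).2.1)
end
end

section
/- Let f = h + conj(g) be a sense-preserving harmonic mapping on the unit disk 𝔻 (so |g′(z)| < |h′(z)| for all z ∈ 𝔻) with dilatation ω = g′/h′ satisfying ‖ω‖_∞ := sup_{z ∈ 𝔻} |ω(z)| < 1. If h is a starlike function (analytic, univalent on 𝔻, h(0) = 0, with h(𝔻) starlike with respect to 0), then f is normal, i.e. ‖f‖_n < ∞. -/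
open Complex Metric Set ENNReal Filter

noncomputable section

open Function Topology ComplexConjugate

/-!
Since `h(𝔻)` is starlike and, by Liouville's theorem applied to `h⁻¹`, not all of `ℂ`, it omits
a whole ray `{t a | t ≥ 1}`. So `1 - h / a` maps `𝔻` into the slit plane, and the Schwarz–Pick
lemma, transported there by `√·` and a Cayley map, gives `(1 - |z|²) |h'(z)| ≤ 4 (|a| + |h(z)|)`.
Integrating `g' / h'` (of modulus `≤ c < 1`) along `[0, h(z)] ⊆ h(𝔻)` gives
`|g(z) - g(0)| ≤ c |h(z)|`, hence `|f(z)| ≥ (1 - c) |h(z)| - |g(0)|`: the growth of `|h|` in the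
numerator of `‖f‖ₙ` is absorbed by `1 + |f|²`.
-/

lemma mem_unitDisk_iff {z : ℂ} : z ∈ 𝔻 ↔ ‖z‖ < 1 := mem_ball_zero_iff

lemma isOpen_unitDisk : IsOpen 𝔻 := isOpen_ball

lemma zero_mem_unitDisk : (0 : ℂ) ∈ 𝔻 := mem_ball_self one_pos

def mobius (p z : ℂ) : ℂ := (z - p) / (1 - conj p * z)

lemma one_sub_conj_mul_ne_zero_s15 {p z : ℂ} (hp : p ∈ 𝔻) (hz : z ∈ 𝔻) : 1 - conj p * z ≠ 0 := by
  rw [mem_unitDisk_iff] at hp hz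
  refine sub_ne_zero.2 fun h => ?_
  have := congrArg (‖·‖) h
  simp only [norm_one, norm_mul, Complex.norm_conj] at this
  nlinarith [norm_nonneg p, norm_nonneg z]

lemma mapsTo_mobius {p : ℂ} (hp : p ∈ 𝔻) : MapsTo (mobius p) 𝔻 𝔻 := by
  intro z hz
  have hden := one_sub_conj_mul_ne_zero_s15 hp hz
  rw [mem_unitDisk_iff] at hp hz ⊢
  rw [mobius, norm_div, div_lt_one (norm_pos_iff.2 hden),
    ← sq_lt_sq₀ (norm_nonneg _) (norm_nonneg _), Complex.sq_norm, Complex.sq_norm]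
  have key : normSq (1 - conj p * z) - normSq (z - p) = (1 - normSq p) * (1 - normSq z) := by
    simp only [normSq_apply, sub_re, sub_im, mul_re, mul_im, conj_re, conj_im, one_re, one_im]
    ring
  have hp' : normSq p < 1 := by rw [← Complex.sq_norm]; nlinarith [norm_nonneg p]
  have hz' : normSq z < 1 := by rw [← Complex.sq_norm]; nlinarith [norm_nonneg z]
  nlinarith

lemma hasDerivAt_mobius {p z : ℂ} (hden : 1 - conj p * z ≠ 0) :
    HasDerivAt (mobius p) ((1 - conj p * p) / (1 - conj p * z) ^ 2) z := by
  have hnum : HasDerivAt (fun w => w - p) 1 z := (hasDerivAt_id z).sub_const p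
  have hden' : HasDerivAt (fun w => 1 - conj p * w) (-conj p) z := by
    simpa using ((hasDerivAt_id z).const_mul (conj p)).const_sub 1
  exact (hnum.div hden' hden).congr_deriv (by ring)

lemma differentiableOn_mobius {p : ℂ} (hp : p ∈ 𝔻) : DifferentiableOn ℂ (mobius p) 𝔻 :=
  fun _ hz =>
    (hasDerivAt_mobius (one_sub_conj_mul_ne_zero_s15 hp hz)).differentiableAt.differentiableWithinAt

lemma mobius_self (p : ℂ) : mobius p p = 0 := by simp [mobius]

lemma mobius_neg_zero (p : ℂ) : mobius (-p) 0 = p := by simp [mobius]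

lemma hasDerivAt_mobius_self {p : ℂ} (hp : p ∈ 𝔻) :
    HasDerivAt (mobius p) ((1 - ‖p‖ ^ 2 : ℝ) : ℂ)⁻¹ p := by
  have hden := one_sub_conj_mul_ne_zero_s15 hp hp
  convert hasDerivAt_mobius hden using 1
  rw [conj_mul'] at hden ⊢
  push_cast
  field_simp

lemma hasDerivAt_mobius_neg_zero (p : ℂ) :
    HasDerivAt (mobius (-p)) ((1 - ‖p‖ ^ 2 : ℝ) : ℂ) 0 := by
  convert hasDerivAt_mobius (p := -p) (z := 0) (by simp) using 1
  simp [conj_mul']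

/-- The Schwarz–Pick lemma. -/
theorem one_sub_sq_mul_norm_deriv_le {ψ : ℂ → ℂ} (hψ : DifferentiableOn ℂ ψ 𝔻)
    (hmaps : MapsTo ψ 𝔻 𝔻) {z : ℂ} (hz : z ∈ 𝔻) : (1 - ‖z‖ ^ 2) * ‖deriv ψ z‖ ≤ 1 - ‖ψ z‖ ^ 2 := by
  have hz' : -z ∈ 𝔻 := by simpa [mem_unitDisk_iff] using hz
  have hw := hmaps hz
  set F := mobius (ψ z) ∘ ψ ∘ mobius (-z)
  have hF : DifferentiableOn ℂ F 𝔻 :=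
    (differentiableOn_mobius hw).comp (hψ.comp (differentiableOn_mobius hz') (mapsTo_mobius hz'))
      (hmaps.comp (mapsTo_mobius hz'))
  have hFmaps : MapsTo F 𝔻 𝔻 := (mapsTo_mobius hw).comp (hmaps.comp (mapsTo_mobius hz'))
  have hF0 : F 0 = 0 := by simp [F, mobius_neg_zero, mobius_self]
  have hschwarz : ‖deriv F 0‖ ≤ 1 := by
    simpa using Complex.norm_deriv_le_div_of_mapsTo_ball hF
      (by rw [hF0]; exact hFmaps.mono_right ball_subset_closedBall) one_pos
  have hψ' : HasDerivAt ψ (deriv ψ z) (mobius (-z) 0) := by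
    rw [mobius_neg_zero]
    exact (hψ.differentiableAt (isOpen_unitDisk.mem_nhds hz)).hasDerivAt
  have hmob : HasDerivAt (mobius (ψ z)) ((1 - ‖ψ z‖ ^ 2 : ℝ) : ℂ)⁻¹ (ψ (mobius (-z) 0)) := by
    rw [mobius_neg_zero]
    exact hasDerivAt_mobius_self hw
  rw [(hmob.comp 0 (hψ'.comp 0 (hasDerivAt_mobius_neg_zero z))).deriv] at hschwarz
  have hz1 : 0 ≤ 1 - ‖z‖ ^ 2 := by nlinarith [mem_unitDisk_iff.1 hz, norm_nonneg z]
  have hw1 : 0 < 1 - ‖ψ z‖ ^ 2 := by nlinarith [mem_unitDisk_iff.1 hw, norm_nonneg (ψ z)]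
  rw [norm_mul, norm_mul, norm_inv, Complex.norm_real, Complex.norm_real, Real.norm_of_nonneg hz1,
    Real.norm_of_nonneg hw1.le, inv_mul_le_iff₀ hw1, mul_one] at hschwarz
  linarith

lemma add_one_ne_zero_of_re_pos {u : ℂ} (hu : 0 < u.re) : u + 1 ≠ 0 := by
  intro h
  have := congrArg re h
  simp only [add_re, one_re, zero_re] at this
  linarith

lemma one_sub_norm_cayley_sq {u : ℂ} (hu : 0 < u.re) :
    1 - ‖(u - 1) / (u + 1)‖ ^ 2 = 4 * u.re / ‖u + 1‖ ^ 2 := by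
  have hu1 : ‖u + 1‖ ^ 2 ≠ 0 := by simpa using add_one_ne_zero_of_re_pos hu
  rw [norm_div, div_pow, eq_div_iff hu1, sub_mul, div_mul_cancel₀ _ hu1, one_mul, Complex.sq_norm,
    Complex.sq_norm]
  simp only [normSq_apply, add_re, add_im, sub_re, sub_im, one_re, one_im]
  ring

lemma cayley_mem_unitDisk {u : ℂ} (hu : 0 < u.re) : (u - 1) / (u + 1) ∈ 𝔻 := by
  have h := one_sub_norm_cayley_sq hu
  have : 0 < 4 * u.re / ‖u + 1‖ ^ 2 :=
    div_pos (by linarith) (pow_pos (norm_pos_iff.2 (add_one_ne_zero_of_re_pos hu)) 2)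
  rw [mem_unitDisk_iff, ← sq_lt_one_iff₀ (norm_nonneg _)]
  linarith

theorem one_sub_sq_mul_norm_deriv_le_of_re_pos {u : ℂ → ℂ} (hu : DifferentiableOn ℂ u 𝔻)
    (hre : ∀ z ∈ 𝔻, 0 < (u z).re) {z : ℂ} (hz : z ∈ 𝔻) :
    (1 - ‖z‖ ^ 2) * ‖deriv u z‖ ≤ 2 * (u z).re := by
  have hu1 : ∀ z ∈ 𝔻, u z + 1 ≠ 0 := fun z hz => add_one_ne_zero_of_re_pos (hre z hz)
  set φ := fun z => (u z - 1) / (u z + 1)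
  have hφ : DifferentiableOn ℂ φ 𝔻 := (hu.sub_const 1).div (hu.add_const 1) hu1
  have hderiv : deriv φ z = 2 * deriv u z / (u z + 1) ^ 2 := by
    have hu' := (hu.differentiableAt (isOpen_unitDisk.mem_nhds hz)).hasDerivAt
    exact (((hu'.sub_const 1).div (hu'.add_const 1) (hu1 z hz)).congr_deriv (by ring)).deriv
  have hSP := one_sub_sq_mul_norm_deriv_le hφ (fun z hz => cayley_mem_unitDisk (hre z hz)) hz
  have hpos : 0 < ‖u z + 1‖ ^ 2 := pow_pos (norm_pos_iff.2 (hu1 z hz)) 2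
  rw [one_sub_norm_cayley_sq (hre z hz), hderiv, norm_div, norm_mul, norm_pow, Complex.norm_ofNat,
    ← mul_div_assoc, div_le_div_iff_of_pos_right hpos] at hSP
  linarith

lemma re_sqrt_pos {q : ℂ} (hq : q ∈ slitPlane) : 0 < (Complex.sqrt q).re := by
  rw [Complex.sqrt, cpow_inv_two_re, Real.sqrt_pos]
  rcases mem_slitPlane_iff.1 hq with hre | him
  · linarith [norm_nonneg q]
  · linarith [neg_abs_le q.re, abs_re_lt_norm.2 him]

theorem one_sub_sq_mul_norm_deriv_le_of_mem_slitPlane {q : ℂ → ℂ} (hq : DifferentiableOn ℂ q 𝔻)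
    (hslit : ∀ z ∈ 𝔻, q z ∈ slitPlane) {z : ℂ} (hz : z ∈ 𝔻) :
    (1 - ‖z‖ ^ 2) * ‖deriv q z‖ ≤ 4 * ‖q z‖ := by
  set u := fun z => Complex.sqrt (q z)
  have hu : DifferentiableOn ℂ u 𝔻 := fun w hw =>
    ((differentiableAt_sqrt (hslit w hw)).comp w
      (hq.differentiableAt (isOpen_unitDisk.mem_nhds hw))).differentiableWithinAt
  have hsq : q = fun z => u z ^ 2 := funext fun z => (cpow_ofNat_inv_pow (q z) 2).symm
  have hderiv : deriv q z = 2 * u z * deriv u z := by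
    rw [hsq, ((hu.differentiableAt (isOpen_unitDisk.mem_nhds hz)).hasDerivAt.fun_pow 2).deriv]
    ring
  have hSP := one_sub_sq_mul_norm_deriv_le_of_re_pos hu (fun w hw => re_sqrt_pos (hslit w hw)) hz
  have hnorm : ‖q z‖ = ‖u z‖ ^ 2 := by rw [hsq, norm_pow]
  rw [hderiv, hnorm, norm_mul, norm_mul, Complex.norm_ofNat]
  have hz1 : 0 ≤ 1 - ‖z‖ ^ 2 := by nlinarith [mem_unitDisk_iff.1 hz, norm_nonneg z]
  nlinarith [re_le_norm (u z), norm_nonneg (u z)]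

lemma one_sub_div_mem_slitPlane {s : Set ℂ} (hs : StarConvex ℝ 0 s) {a w : ℂ} (ha : a ∉ s)
    (hw : w ∈ s) : 1 - w / a ∈ slitPlane := by
  have ha0 : a ≠ 0 := by rintro rfl; exact ha (hs.mem ⟨w, hw⟩)
  by_contra hslit
  rw [mem_slitPlane_iff_not_le_zero, not_not, Complex.le_def] at hslit
  simp only [sub_re, one_re, sub_im, one_im, zero_re, zero_im] at hslit
  set t := (w / a).re
  have ht : 1 ≤ t := by linarith [hslit.1]
  have hwa : w / a = t := Complex.ext rfl (by simp; linarith [hslit.2])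
  refine ha ?_
  have hat : a = (t⁻¹ : ℝ) • w := by
    rw [div_eq_iff ha0] at hwa
    have ht0 : (t : ℂ) ≠ 0 := ofReal_ne_zero.2 (by linarith)
    rw [hwa, Complex.real_smul, ofReal_inv, inv_mul_cancel_left₀ ht0]
  rw [hat]
  exact starConvex_zero_iff.1 hs hw (by positivity) (inv_le_one_of_one_le₀ ht)

theorem one_sub_sq_mul_norm_deriv_le_of_starConvex {h : ℂ → ℂ} (hh : DifferentiableOn ℂ h 𝔻)
    (hΩ : StarConvex ℝ 0 (h '' 𝔻)) {a : ℂ} (ha : a ∉ h '' 𝔻) {z : ℂ} (hz : z ∈ 𝔻) :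
    (1 - ‖z‖ ^ 2) * ‖deriv h z‖ ≤ 4 * ‖a - h z‖ := by
  have ha0 : a ≠ 0 := fun ha0 => ha (ha0 ▸ hΩ.mem ⟨h z, mem_image_of_mem h hz⟩)
  set q := fun z => 1 - h z / a
  have hq : DifferentiableOn ℂ q 𝔻 := (hh.div_const a).const_sub 1
  have hderiv : deriv q z = -(deriv h z / a) :=
    (((hh.differentiableAt (isOpen_unitDisk.mem_nhds hz)).hasDerivAt.div_const a).const_sub 1).deriv
  have hSP := one_sub_sq_mul_norm_deriv_le_of_mem_slitPlane hq
    (fun w hw => one_sub_div_mem_slitPlane hΩ ha (mem_image_of_mem h hw)) hz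
  have hqz : q z = (a - h z) / a := by simp only [q]; field_simp
  rw [hderiv, hqz, norm_neg, norm_div, norm_div, ← mul_div_assoc, mul_div_assoc' 4,
    div_le_div_iff_of_pos_right (norm_pos_iff.2 ha0)] at hSP
  exact hSP

section Inverse

variable {f : ℂ → ℂ} {U : Set ℂ}

lemma hasDerivAt_invFunOn (hU : IsOpen U) (hf : DifferentiableOn ℂ f U) (hinj : InjOn f U)
    (hf' : ∀ z ∈ U, deriv f z ≠ 0) {w : ℂ} (hw : w ∈ f '' U) :
    HasDerivAt (invFunOn f U) (deriv f (invFunOn f U w))⁻¹ w := by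
  obtain ⟨z, hz, rfl⟩ := hw
  rw [hinj.leftInvOn_invFunOn hz]
  have hstrict := (hf.analyticAt (hU.mem_nhds hz)).hasStrictDerivAt
  exact (hstrict.to_local_left_inverse (hf' z hz)
    (Filter.mem_of_superset (hU.mem_nhds hz) fun x hx => hinj.leftInvOn_invFunOn hx)).hasDerivAt

lemma image_ne_univ_of_injOn (hUb : Bornology.IsBounded U) (hU : U.Nontrivial) (hinj : InjOn f U)
    (hinv : ∀ w ∈ f '' U, DifferentiableAt ℂ (invFunOn f U) w) : f '' U ≠ univ := by
  intro hfU
  have hmem : ∀ w, w ∈ f '' U := eq_univ_iff_forall.1 hfU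
  have hbdd : Bornology.IsBounded (range (invFunOn f U)) :=
    hUb.subset <| range_subset_iff.2 fun w => invFunOn_mem (hmem w)
  obtain ⟨z₁, hz₁, z₂, hz₂, hne⟩ := hU
  refine hne ?_
  rw [← hinj.leftInvOn_invFunOn hz₁, ← hinj.leftInvOn_invFunOn hz₂]
  exact Differentiable.apply_eq_apply_of_bounded (fun w => hinv w (hmem w)) hbdd _ _

lemma norm_sub_le_of_segment_subset (hU : IsOpen U) (hf : DifferentiableOn ℂ f U)
    (hinj : InjOn f U) (hf' : ∀ z ∈ U, deriv f z ≠ 0) {g : ℂ → ℂ} (hg : DifferentiableOn ℂ g U)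
    {c : ℝ} (hc : ∀ z ∈ U, ‖deriv g z‖ ≤ c * ‖deriv f z‖) {z w : ℂ} (hz : z ∈ U) (hw : w ∈ U)
    (hseg : segment ℝ (f z) (f w) ⊆ f '' U) : ‖g w - g z‖ ≤ c * ‖f w - f z‖ := by
  set F := invFunOn f U
  have hF : ∀ v ∈ segment ℝ (f z) (f w), F v ∈ U := fun v hv => invFunOn_mem (hseg hv)
  have hderiv : ∀ v ∈ segment ℝ (f z) (f w),
      HasDerivAt (g ∘ F) (deriv g (F v) * (deriv f (F v))⁻¹) v := fun v hv =>
    (hg.differentiableAt (hU.mem_nhds (hF v hv))).hasDerivAt.comp v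
      (hasDerivAt_invFunOn hU hf hinj hf' (hseg hv))
  have hbound : ∀ v ∈ segment ℝ (f z) (f w), ‖deriv g (F v) * (deriv f (F v))⁻¹‖ ≤ c := by
    intro v hv
    rw [norm_mul, norm_inv, mul_inv_le_iff₀ (norm_pos_iff.2 (hf' _ (hF v hv)))]
    exact hc _ (hF v hv)
  have := Convex.norm_image_sub_le_of_norm_hasDerivWithin_le
    (fun v hv => (hderiv v hv).hasDerivWithinAt) hbound (convex_segment _ _) (left_mem_segment ℝ _ _) (right_mem_segment ℝ _ _)
  simpa [F, hinj.leftInvOn_invFunOn hz, hinj.leftInvOn_invFunOn hw] using this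

end Inverse

lemma nQuot_le {h g : ℂ → ℂ} {z : ℂ} (hz : z ∈ 𝔻) {A b c : ℝ} (hA : 0 ≤ A) (hb : 0 ≤ b)
    (hc0 : 0 ≤ c) (hc1 : c < 1) (hh' : (1 - ‖z‖ ^ 2) * ‖deriv h z‖ ≤ 4 * (A + ‖h z‖))
    (hg' : ‖deriv g z‖ ≤ c * ‖deriv h z‖) (hg : ‖g z‖ ≤ b + c * ‖h z‖) :
    nQuot h g z ≤ 4 * (1 + c) * (A + (b + 1) / (1 - c)) := by
  have hF : (1 - c) * ‖h z‖ ≤ ‖harmMap h g z‖ + b := by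
    have := norm_sub_le (harmMap h g z) (conj (g z))
    rw [harmMap, add_sub_cancel_right, Complex.norm_conj, ← harmMap] at this
    linarith
  set H := ‖h z‖
  set F := ‖harmMap h g z‖
  have hH : H ≤ (b + 1) / (1 - c) * (1 + F ^ 2) := by
    rw [div_mul_eq_mul_div, le_div_iff₀ (by linarith)]
    nlinarith [sq_nonneg (F - 1), norm_nonneg (harmMap h g z)]
  have hz1 : 0 ≤ 1 - ‖z‖ ^ 2 := by nlinarith [mem_unitDisk_iff.1 hz, norm_nonneg z]
  rw [nQuot, div_le_iff₀ (by positivity)]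
  calc (1 - ‖z‖ ^ 2) * (‖deriv h z‖ + ‖deriv g z‖)
      ≤ (1 + c) * ((1 - ‖z‖ ^ 2) * ‖deriv h z‖) := by nlinarith
    _ ≤ (1 + c) * (4 * (A + H)) := by gcongr
    _ ≤ 4 * (1 + c) * (A + (b + 1) / (1 - c)) * (1 + F ^ 2) := by
        nlinarith [mul_nonneg hA (sq_nonneg F)]

theorem normal_of_starlike (h g : ℂ → ℂ)
    (hh : DifferentiableOn ℂ h 𝔻) (hg : DifferentiableOn ℂ g 𝔻)
    (hsp : ∀ z ∈ 𝔻, ‖deriv g z‖ < ‖deriv h z‖)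
    (hω : ∃ c : ℝ, c < 1 ∧ ∀ z ∈ 𝔻, ‖deriv g z‖ ≤ c * ‖deriv h z‖)
    (hinj : Set.InjOn h 𝔻) (h0 : h 0 = 0)
    (hstar : ∀ w ∈ h '' 𝔻, ∀ t : ℝ, t ∈ Set.Icc (0 : ℝ) 1 → (t : ℂ) * w ∈ h '' 𝔻) :
    harmNorm h g < ⊤ := by
  obtain ⟨c, hc1, hc⟩ := hω
  have hh' : ∀ z ∈ 𝔻, deriv h z ≠ 0 := fun z hz =>
    norm_pos_iff.1 ((norm_nonneg _).trans_lt (hsp z hz))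
  have hc0 : 0 ≤ c := nonneg_of_mul_nonneg_left ((norm_nonneg _).trans (hc 0 zero_mem_unitDisk))
    (norm_pos_iff.2 (hh' 0 zero_mem_unitDisk))
  have hΩ : StarConvex ℝ 0 (h '' 𝔻) :=
    starConvex_zero_iff.2 fun w hw t ht0 ht1 => hstar w hw t ⟨ht0, ht1⟩
  obtain ⟨a, ha⟩ := ne_univ_iff_exists_notMem _ |>.1 <| image_ne_univ_of_injOn isBounded_ball
    ⟨0, zero_mem_unitDisk, 1 / 2, by norm_num [mem_unitDisk_iff], by norm_num⟩ hinj
    fun w hw => (hasDerivAt_invFunOn isOpen_unitDisk hh hinj hh' hw).differentiableAt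
  have hgz : ∀ z ∈ 𝔻, ‖g z‖ ≤ ‖g 0‖ + c * ‖h z‖ := fun z hz => by
    have := norm_sub_le_of_segment_subset isOpen_unitDisk hh hinj hh' hg hc zero_mem_unitDisk hz
      (by rw [h0]; exact hΩ.segment_subset (mem_image_of_mem h hz))
    rw [h0, sub_zero] at this
    linarith [norm_le_norm_add_norm_sub' (g z) (g 0)]
  refine lt_of_le_of_lt (iSup₂_le fun z hz => ofReal_le_ofReal <| nQuot_le hz (norm_nonneg a)
    (norm_nonneg (g 0)) hc0 hc1 ?_ (hc z hz) (hgz z hz)) ofReal_lt_top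
  calc (1 - ‖z‖ ^ 2) * ‖deriv h z‖ ≤ 4 * ‖a - h z‖ :=
        one_sub_sq_mul_norm_deriv_le_of_starConvex hh hΩ ha hz
    _ ≤ 4 * (‖a‖ + ‖h z‖) := by gcongr; exact norm_sub_le a (h z)
end
end
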